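/- Let m ≥ 2 and let d_1, …, d_m be real numbers such that there is an index j₀ with d_{j₀} < d_j for all j ≠ j₀ (a unique strict minimum). For σ > 0 define p_j(σ) = exp(−d_j/(2σ²)) / Σ_{k=1}^{m} exp(−d_k/(2σ²)), H(σ) = −Σ_{j=1}^{m} p_j(σ) · log₂ p_j(σ), and Perp(σ) = 2^{H(σ)}. Then for every target perplexity value p with 1 < p < m there exists a unique σ > 0 such that Perp(σ) = p. (Equivalently, the binary search for the bandwidth σ_i achieving a user-specified perplexity in t-SNE has a unique solution.) -/

import Mathlib

/-!
With `β = 1 / (2σ²)` the distribution `p(σ)` is the Gibbs distribution of the energies `d` at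
inverse temperature `β`, and `log Perp` is its entropy `S(β) = β ⟨d⟩_β + log Z(β)` in nats.
Differentiating gives `S'(β) = -β Var_β(d)`, which is negative for `β > 0` as soon as `d` is not
constant, so `S` decreases strictly on `[0, ∞)` from `S(0) = log m`. As `β → ∞` the Gibbs
distribution concentrates on the unique minimiser of `d`, so `S(β) → 0`. Hence every value in
`(0, log m)` is taken exactly once on `(0, ∞)`, and `σ ↦ 1 / (2σ²)` is a bijection of `(0, ∞)`.
-/

open Real Filter Topology Finset

lemma two_mul_sum_mul_sum_sq_sub_sq {ι : Type*} (s : Finset ι) (w e : ι → ℝ) :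
    2 * ((∑ k ∈ s, w k) * (∑ k ∈ s, e k ^ 2 * w k) - (∑ k ∈ s, e k * w k) ^ 2)
      = ∑ j ∈ s, ∑ k ∈ s, w j * w k * (e j - e k) ^ 2 := by
  have h : ∀ j k, w j * w k * (e j - e k) ^ 2
      = w j * (e k ^ 2 * w k) - 2 * ((e j * w j) * (e k * w k)) + e j ^ 2 * w j * w k := by
    intro j k; ring
  simp_rw [h, sum_add_distrib, sum_sub_distrib, ← mul_sum, ← sum_mul]
  ring

lemma sum_mul_sum_sq_sub_sq_pos {ι : Type*} {s : Finset ι} {w e : ι → ℝ}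
    (hw : ∀ k ∈ s, 0 < w k) {i j : ι} (hi : i ∈ s) (hj : j ∈ s) (hij : e i ≠ e j) :
    0 < (∑ k ∈ s, w k) * (∑ k ∈ s, e k ^ 2 * w k) - (∑ k ∈ s, e k * w k) ^ 2 := by
  have hterm : ∀ a ∈ s, ∀ b ∈ s, 0 ≤ w a * w b * (e a - e b) ^ 2 := fun a ha b hb => by
    have := hw a ha; have := hw b hb; positivity
  have hij_pos : 0 < w i * w j * (e i - e j) ^ 2 :=
    mul_pos (mul_pos (hw i hi) (hw j hj)) (pow_two_pos_of_ne_zero (sub_ne_zero.2 hij))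
  have : 0 < ∑ a ∈ s, ∑ b ∈ s, w a * w b * (e a - e b) ^ 2 :=
    sum_pos' (fun a ha => sum_nonneg (hterm a ha))
      ⟨i, hi, sum_pos' (hterm i hi) ⟨j, hj, hij_pos⟩⟩
  linarith [two_mul_sum_mul_sum_sq_sub_sq s w e]

section Gibbs

variable {ι : Type*} [Fintype ι] (e : ι → ℝ)

/-- The moment `n = 0` is the partition function `Z(β)`. -/
noncomputable def gibbsMoment (n : ℕ) (β : ℝ) : ℝ := ∑ k, e k ^ n * exp (-(β * e k))

noncomputable def gibbs (β : ℝ) (k : ι) : ℝ := exp (-(β * e k)) / gibbsMoment e 0 β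

noncomputable def gibbsEntropy (β : ℝ) : ℝ := ∑ k, negMulLog (gibbs e β k)

lemma gibbsMoment_zero_pos [Nonempty ι] (β : ℝ) : 0 < gibbsMoment e 0 β :=
  sum_pos (fun k _ => by simpa using exp_pos _) univ_nonempty

lemma hasDerivAt_gibbsMoment (n : ℕ) (β : ℝ) :
    HasDerivAt (gibbsMoment e n) (-gibbsMoment e (n + 1) β) β := by
  have hk : ∀ k, HasDerivAt (fun b => e k ^ n * exp (-(b * e k)))
      (e k ^ n * (exp (-(β * e k)) * -e k)) β := fun k =>
    (((hasDerivAt_mul_const (e k)).neg).exp).const_mul _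
  refine (HasDerivAt.fun_sum (u := univ) fun k _ => hk k).congr_deriv ?_
  rw [gibbsMoment, ← sum_neg_distrib]
  congr 1; funext k; ring

lemma gibbs_sub_const (c β : ℝ) : gibbs (fun k => e k - c) β = gibbs e β := by
  have hexp : ∀ k, exp (-(β * (e k - c))) = exp (β * c) * exp (-(β * e k)) := fun k => by
    rw [← exp_add]; ring_nf
  funext k
  simp only [gibbs, gibbsMoment, pow_zero, one_mul, hexp, ← mul_sum]
  exact mul_div_mul_left _ _ (exp_pos _).ne'

lemma gibbsEntropy_eq [Nonempty ι] (β : ℝ) :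
    gibbsEntropy e β = β * gibbsMoment e 1 β / gibbsMoment e 0 β + log (gibbsMoment e 0 β) := by
  have hZ := (gibbsMoment_zero_pos e β).ne'
  have hk : ∀ k, negMulLog (gibbs e β k)
      = β * (e k * exp (-(β * e k))) / gibbsMoment e 0 β
        + exp (-(β * e k)) / gibbsMoment e 0 β * log (gibbsMoment e 0 β) := fun k => by
    rw [gibbs, negMulLog, log_div (exp_pos _).ne' hZ, log_exp]; ring
  rw [gibbsEntropy, Fintype.sum_congr _ _ hk, sum_add_distrib, ← sum_div, ← mul_sum, ← sum_mul,
    ← sum_div]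
  simp only [gibbsMoment, pow_zero, pow_one, one_mul] at hZ ⊢
  rw [div_self hZ, one_mul]

lemma hasDerivAt_gibbsEntropy [Nonempty ι] (β : ℝ) :
    HasDerivAt (gibbsEntropy e)
      (-(β * (gibbsMoment e 2 β * gibbsMoment e 0 β - gibbsMoment e 1 β ^ 2))
        / gibbsMoment e 0 β ^ 2) β := by
  have hZ := (gibbsMoment_zero_pos e β).ne'
  have h := (((hasDerivAt_id β).mul (hasDerivAt_gibbsMoment e 1 β)).div
    (hasDerivAt_gibbsMoment e 0 β) hZ).add ((hasDerivAt_gibbsMoment e 0 β).log hZ)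
  rw [show gibbsEntropy e = _ from funext (gibbsEntropy_eq e)]
  refine h.congr_deriv ?_
  simp only [Pi.mul_apply, id, zero_add]
  field_simp
  ring

lemma continuous_gibbsEntropy [Nonempty ι] : Continuous (gibbsEntropy e) :=
  continuous_iff_continuousAt.2 fun β => (hasDerivAt_gibbsEntropy e β).continuousAt

lemma gibbsEntropy_zero [Nonempty ι] : gibbsEntropy e 0 = log (Fintype.card ι) := by
  simp [gibbsEntropy_eq, gibbsMoment]

lemma strictAntiOn_gibbsEntropy {i j : ι} (hij : e i ≠ e j) :
    StrictAntiOn (gibbsEntropy e) (Set.Ici 0) := by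
  have : Nonempty ι := ⟨i⟩
  refine strictAntiOn_of_deriv_neg (convex_Ici 0) (continuous_gibbsEntropy e).continuousOn
    fun β hβ => ?_
  rw [interior_Ici] at hβ
  have hvar : 0 < gibbsMoment e 2 β * gibbsMoment e 0 β - gibbsMoment e 1 β ^ 2 := by
    have := sum_mul_sum_sq_sub_sq_pos (fun k _ => exp_pos (-(β * e k)))
      (mem_univ i) (mem_univ j) hij
    simp only [gibbsMoment, pow_zero, pow_one, one_mul]
    linarith
  rw [(hasDerivAt_gibbsEntropy e β).deriv]
  have := gibbsMoment_zero_pos e β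
  have : 0 < β * (gibbsMoment e 2 β * gibbsMoment e 0 β - gibbsMoment e 1 β ^ 2) :=
    mul_pos hβ hvar
  exact div_neg_of_neg_of_pos (neg_neg_of_pos this) (by positivity)

variable {e}

lemma tendsto_gibbs_atTop [DecidableEq ι] {j₀ : ι} (hj₀ : ∀ j, j ≠ j₀ → e j₀ < e j) (k : ι) :
    Tendsto (fun β => gibbs e β k) atTop (𝓝 (if k = j₀ then 1 else 0)) := by
  have hexp : ∀ j, Tendsto (fun β => exp (-(β * (e j - e j₀)))) atTop
      (𝓝 (if j = j₀ then 1 else 0)) := by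
    intro j
    by_cases hj : j = j₀
    · simp [hj]
    · simp only [hj, if_false]
      exact tendsto_exp_atBot.comp <| tendsto_neg_atTop_atBot.comp <|
        tendsto_id.atTop_mul_const (sub_pos.2 (hj₀ j hj))
  have hZ : Tendsto (fun β => gibbsMoment (fun j => e j - e j₀) 0 β) atTop (𝓝 1) := by
    simpa [gibbsMoment] using tendsto_finsetSum univ fun j _ => hexp j
  simp_rw [← gibbs_sub_const e (e j₀)]
  have := (hexp k).div hZ one_ne_zero
  rwa [div_one] at this

lemma tendsto_gibbsEntropy_atTop {j₀ : ι} (hj₀ : ∀ j, j ≠ j₀ → e j₀ < e j) :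
    Tendsto (gibbsEntropy e) atTop (𝓝 0) := by
  classical
  have : Tendsto (gibbsEntropy e) atTop
      (𝓝 (∑ k, negMulLog (if k = j₀ then 1 else 0))) :=
    tendsto_finsetSum univ fun k _ =>
      (continuous_negMulLog.tendsto _).comp (tendsto_gibbs_atTop hj₀ k)
  simpa [apply_ite negMulLog] using this

lemma existsUnique_gibbsEntropy_eq {j₀ : ι} (hj₀ : ∀ j, j ≠ j₀ → e j₀ < e j) {y : ℝ}
    (hy₀ : 0 < y) (hy : y < log (Fintype.card ι)) :
    ∃! β, 0 < β ∧ gibbsEntropy e β = y := by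
  have : Nonempty ι := ⟨j₀⟩
  have : Nontrivial ι := by
    rw [← Fintype.one_lt_card_iff_nontrivial]
    by_contra! h
    exact absurd (hy₀.trans hy) (not_lt.2 (log_nonpos (Nat.cast_nonneg _) (by exact_mod_cast h)))
  obtain ⟨j, hj⟩ := exists_ne j₀
  have hanti := strictAntiOn_gibbsEntropy e (hj₀ j hj).ne
  obtain ⟨T, hT, hT₀⟩ :=
    (((tendsto_gibbsEntropy_atTop hj₀).eventually_lt_const hy₀).and (eventually_ge_atTop 0)).exists
  obtain ⟨β, ⟨hβ₀, -⟩, hβ⟩ := intermediate_value_Ioc' hT₀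
    (continuous_gibbsEntropy e).continuousOn ⟨hT.le, (gibbsEntropy_zero e).symm ▸ hy⟩
  exact ⟨β, ⟨hβ₀, hβ⟩, fun β' ⟨hβ'₀, hβ'⟩ =>
    hanti.injOn (Set.mem_Ici.2 hβ'₀.le) (Set.mem_Ici.2 hβ₀.le) (hβ'.trans hβ.symm)⟩

end Gibbs

lemma rpow_neg_sum_mul_logb {ι : Type*} [Fintype ι] (q : ι → ℝ) {b : ℝ} (hb : 0 < b)
    (hb₁ : b ≠ 1) : b ^ (-∑ k, q k * logb b (q k)) = exp (∑ k, negMulLog (q k)) := by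
  have hlog : log b ≠ 0 := log_ne_zero_of_pos_of_ne_one hb hb₁
  rw [rpow_def_of_pos hb, mul_neg, mul_sum, ← sum_neg_distrib]
  congr 1
  refine sum_congr rfl fun k _ => ?_
  rw [negMulLog, logb]
  field_simp

lemma bijOn_inv_two_mul_sq : Set.BijOn (fun σ : ℝ => (2 * σ ^ 2)⁻¹) (Set.Ioi 0) (Set.Ioi 0) := by
  refine ⟨fun σ (hσ : 0 < σ) => ?_, fun σ (hσ : 0 < σ) τ (hτ : 0 < τ) h => ?_,
    fun β (hβ : 0 < β) => ⟨√((2 * β)⁻¹), Set.mem_Ioi.2 (by positivity), ?_⟩⟩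
  · show 0 < (2 * σ ^ 2)⁻¹
    positivity
  · exact (pow_left_inj₀ hσ.le hτ.le two_ne_zero).1 (by simpa using h)
  · simp only [sq_sqrt (by positivity : (0 : ℝ) ≤ (2 * β)⁻¹)]
    field_simp

lemma Set.BijOn.existsUnique_comp {α β : Type*} {f : α → β} {s : Set α} {t : Set β}
    (hf : Set.BijOn f s t) {P : β → Prop} (h : ∃! y, y ∈ t ∧ P y) : ∃! x, x ∈ s ∧ P (f x) := by
  obtain ⟨y, ⟨hyt, hPy⟩, hy⟩ := h
  obtain ⟨x, hxs, rfl⟩ := hf.surjOn hyt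
  exact ⟨x, ⟨hxs, hPy⟩, fun x' ⟨hx's, hPx'⟩ => hf.injOn hx's hxs (hy _ ⟨hf.mapsTo hx's, hPx'⟩)⟩

theorem perplexity_binary_search_unique_solution_general
    (m : ℕ) (d : Fin m → ℝ)
    (j₀ : Fin m) (hj₀ : ∀ j : Fin m, j ≠ j₀ → d j₀ < d j)
    (p : ℝ → Fin m → ℝ)
    (hp : ∀ σ j, p σ j =
      Real.exp (-d j / (2 * σ ^ 2)) / ∑ k : Fin m, Real.exp (-d k / (2 * σ ^ 2)))
    (H : ℝ → ℝ)
    (hH : ∀ σ, H σ = -∑ j : Fin m, p σ j * Real.logb 2 (p σ j))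
    (Perp : ℝ → ℝ)
    (hPerp : ∀ σ, Perp σ = (2 : ℝ) ^ (H σ)) :
    ∀ perp : ℝ, 1 < perp → perp < m →
      ∃! σ : ℝ, 0 < σ ∧ Perp σ = perp := by
  intro perp hperp hperp_m
  have hp_gibbs : ∀ σ, p σ = gibbs d (2 * σ ^ 2)⁻¹ := fun σ => funext fun j => by
    simp only [hp, gibbs, gibbsMoment, pow_zero, one_mul, div_eq_inv_mul, mul_neg]
  have hPerp_eq : ∀ σ, Perp σ = exp (gibbsEntropy d (2 * σ ^ 2)⁻¹) := fun σ => by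
    rw [hPerp, hH, hp_gibbs, rpow_neg_sum_mul_logb _ two_pos (by norm_num), gibbsEntropy]
  have hβ : ∃! β, β ∈ Set.Ioi 0 ∧ gibbsEntropy d β = log perp :=
    existsUnique_gibbsEntropy_eq hj₀ (log_pos hperp)
      (by simpa using log_lt_log (by linarith) hperp_m)
  refine (existsUnique_congr fun σ => ?_).1 (bijOn_inv_two_mul_sq.existsUnique_comp hβ)
  rw [Set.mem_Ioi, hPerp_eq, ← exp_eq_exp, exp_log (by linarith)]

/-- With `p_j(σ) = exp(−d_j/(2σ²)) / Σ_k exp(−d_k/(2σ²))` for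
`m ≥ 2` squared distances having a unique strict minimum,
`H(σ) = −Σ_j p_j(σ) log₂ p_j(σ)` and `Perp(σ) = 2^{H(σ)}`, for every target
perplexity `p` with `1 < p < m` there exists a unique bandwidth `σ > 0` with
`Perp(σ) = p`. -/
theorem perplexity_binary_search_unique_solution
    (m : ℕ) (hm : 2 ≤ m) (d : Fin m → ℝ)
    (j₀ : Fin m) (hj₀ : ∀ j : Fin m, j ≠ j₀ → d j₀ < d j)
    (p : ℝ → Fin m → ℝ)
    (hp : ∀ σ j, p σ j =
      Real.exp (-d j / (2 * σ ^ 2)) / ∑ k : Fin m, Real.exp (-d k / (2 * σ ^ 2)))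
    (H : ℝ → ℝ)
    (hH : ∀ σ, H σ = -∑ j : Fin m, p σ j * Real.logb 2 (p σ j))
    (Perp : ℝ → ℝ)
    (hPerp : ∀ σ, Perp σ = (2 : ℝ) ^ (H σ)) :
    ∀ perp : ℝ, 1 < perp → perp < m →
      ∃! σ : ℝ, 0 < σ ∧ Perp σ = perp :=
  perplexity_binary_search_unique_solution_general m d j₀ hj₀ p hp H hH Perp hPerp
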